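/- Violation of Rule 3a (almost simultaneous Hall set): Let P ⊆ A be an almost simultaneous Hall set, i.e., |N(P)| + |N(P^S) ∩ N(P^T)| = |P| + 1. Then no edge (u,v) with u ∈ (S ∩ T) \ P and v ∈ N(P^S) ∩ N(P^T) can belong to a simultaneous matching of G. -/

import Mathlib

/-!
Suppose a simultaneous matching `M` uses `(u, v)`. Every vertex of `S ∪ T` has exactly one
`M`-partner, and partners are distinct within `S` and within `T`. Split `P` into `P ∩ S` and
`P^T`; each part is matched injectively into `N(P) \ {v}` (`v` is already taken by `u ∉ P`),
and a vertex hit from both parts is hit from `P^S` and from `P^T`, so lies in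
`N(P^S) ∩ N(P^T) \ {v}`. Inclusion–exclusion then gives
`|P| ≤ (|N(P)| - 1) + (|N(P^S) ∩ N(P^T)| - 1) = |P| - 1`.
-/

open Finset

variable {V W : Type*} [DecidableEq V] [DecidableEq W]

/-- Neighborhood of a set `P` of left vertices in the bipartite graph with edge set `E`. -/
def nbhd (E : Finset (V × W)) (P : Finset V) : Finset W :=
  (E.filter (fun e => e.1 ∈ P)).image Prod.snd

/-- A set of pairwise non-adjacent edges. -/
def IsMatching (M : Finset (V × W)) : Prop :=
  ∀ e ∈ M, ∀ f ∈ M, e ≠ f → e.1 ≠ f.1 ∧ e.2 ≠ f.2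

/-- Every vertex of `S` is incident to an edge of `M`. -/
def Covers (M : Finset (V × W)) (S : Finset V) : Prop :=
  ∀ s ∈ S, ∃ e ∈ M, e.1 = s

/-- `M` is a simultaneous matching: `M ∩ (S × B)` is a matching covering `S` and
`M ∩ (T × B)` is a matching covering `T`. -/
def SimMatching (E M : Finset (V × W)) (S T : Finset V) : Prop :=
  M ⊆ E ∧
  IsMatching (M.filter (fun e => e.1 ∈ S)) ∧ Covers (M.filter (fun e => e.1 ∈ S)) S ∧
  IsMatching (M.filter (fun e => e.1 ∈ T)) ∧ Covers (M.filter (fun e => e.1 ∈ T)) T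

lemma mem_nbhd {E : Finset (V × W)} {P : Finset V} {b : W} :
    b ∈ nbhd E P ↔ ∃ a ∈ P, (a, b) ∈ E := by
  simp only [nbhd, mem_image, mem_filter, Prod.exists]
  constructor
  · rintro ⟨a, b, ⟨he, ha⟩, rfl⟩; exact ⟨a, ha, he⟩
  · rintro ⟨a, ha, he⟩; exact ⟨a, b, ⟨he, ha⟩, rfl⟩

lemma nbhd_mono {E : Finset (V × W)} {P Q : Finset V} (h : P ⊆ Q) : nbhd E P ⊆ nbhd E Q :=
  image_subset_image (monotone_filter_right _ fun _ _ ha => h ha)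

lemma nbhd_mono_edges {E F : Finset (V × W)} {P : Finset V} (h : E ⊆ F) :
    nbhd E P ⊆ nbhd F P :=
  image_subset_image (filter_subset_filter _ h)

lemma nbhd_union (E : Finset (V × W)) (P Q : Finset V) :
    nbhd E (P ∪ Q) = nbhd E P ∪ nbhd E Q := by
  simp only [nbhd, ← image_union, ← filter_or, mem_union]

lemma nbhd_filter_fst_of_subset {M : Finset (V × W)} {S X : Finset V} (hX : X ⊆ S) :
    nbhd (M.filter (·.1 ∈ S)) X = nbhd M X := by
  ext b
  simp only [mem_nbhd, mem_filter]
  exact exists_congr fun a => and_congr_right fun ha => and_iff_left (hX ha)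

omit [DecidableEq V] [DecidableEq W] in
lemma Covers.mono {M : Finset (V × W)} {S X : Finset V} (hS : Covers M S) (hX : X ⊆ S) :
    Covers M X :=
  fun a ha => hS a (hX ha)

namespace IsMatching

variable {M : Finset (V × W)}

omit [DecidableEq V] [DecidableEq W] in
lemma eq_of_fst_eq (hM : IsMatching M) {e f : V × W} (he : e ∈ M) (hf : f ∈ M)
    (h : e.1 = f.1) : e = f :=
  by_contra fun hne => (hM e he f hf hne).1 h

omit [DecidableEq V] [DecidableEq W] in
lemma eq_of_snd_eq (hM : IsMatching M) {e f : V × W} (he : e ∈ M) (hf : f ∈ M)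
    (h : e.2 = f.2) : e = f :=
  by_contra fun hne => (hM e he f hf hne).2 h

lemma card_nbhd (hM : IsMatching M) {X : Finset V} (hX : Covers M X) :
    (nbhd M X).card = X.card := by
  have hsnd : Set.InjOn Prod.snd (M.filter (·.1 ∈ X)) :=
    fun e he f hf => hM.eq_of_snd_eq (mem_filter.1 he).1 (mem_filter.1 hf).1
  have hfst : Set.InjOn Prod.fst (M.filter (·.1 ∈ X)) :=
    fun e he f hf => hM.eq_of_fst_eq (mem_filter.1 he).1 (mem_filter.1 hf).1
  have himage : (M.filter (·.1 ∈ X)).image Prod.fst = X := by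
    ext a
    simp only [mem_image, mem_filter]
    constructor
    · rintro ⟨e, ⟨-, ha⟩, rfl⟩; exact ha
    · intro ha
      obtain ⟨e, he, rfl⟩ := hX a ha
      exact ⟨e, ⟨he, ha⟩, rfl⟩
  rw [nbhd, card_image_of_injOn hsnd, ← card_image_of_injOn hfst, himage]

end IsMatching

lemma card_nbhd_of_isMatching_filter {M : Finset (V × W)} {S X : Finset V}
    (hM : IsMatching (M.filter (·.1 ∈ S))) (hS : Covers (M.filter (·.1 ∈ S)) S)
    (hX : X ⊆ S) : (nbhd M X).card = X.card := by
  rw [← nbhd_filter_fst_of_subset hX, hM.card_nbhd (hS.mono hX)]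

omit [DecidableEq W] in
lemma IsMatching.eq_of_snd_eq_of_mem_filter {M : Finset (V × W)} {S : Finset V}
    (hM : IsMatching (M.filter (·.1 ∈ S))) {a c : V} {b : W} (ha : (a, b) ∈ M)
    (hc : (c, b) ∈ M) (haS : a ∈ S) (hcS : c ∈ S) : a = c :=
  congrArg Prod.fst (hM.eq_of_snd_eq (mem_filter.2 ⟨ha, haS⟩) (mem_filter.2 ⟨hc, hcS⟩) rfl)

namespace SimMatching

variable {E M : Finset (V × W)} {S T : Finset V}

omit [DecidableEq W] in
lemma fst_eq_of_mem_inter (hM : SimMatching E M S T) {u a : V} {v : W} (huv : (u, v) ∈ M)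
    (hu : u ∈ S ∩ T) (hav : (a, v) ∈ M) (ha : a ∈ S ∪ T) : a = u := by
  obtain ⟨-, hMS, -, hMT, -⟩ := hM
  rcases mem_union.1 ha with haS | haT
  · exact hMS.eq_of_snd_eq_of_mem_filter hav huv haS (mem_inter.1 hu).1
  · exact hMT.eq_of_snd_eq_of_mem_filter hav huv haT (mem_inter.1 hu).2

lemma notMem_nbhd (hM : SimMatching E M S T) {P : Finset V} (hP : P ⊆ S ∪ T) {u : V} {v : W}
    (huv : (u, v) ∈ M) (hu : u ∈ (S ∩ T) \ P) : v ∉ nbhd M P := by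
  rw [mem_nbhd]
  rintro ⟨a, haP, hav⟩
  obtain ⟨huST, huP⟩ := mem_sdiff.1 hu
  exact huP (hM.fst_eq_of_mem_inter huv huST hav (hP haP) ▸ haP)

/-- The `S`-side partner of a common vertex cannot lie in `T`, since `M` restricted to `T`
is a matching and the `T`-side partner lies outside `S`. -/
lemma nbhd_inter_nbhd_subset (hM : SimMatching E M S T) (P : Finset V) :
    nbhd M (P ∩ S) ∩ nbhd M (P ∩ (T \ S)) ⊆
      nbhd M (P ∩ (S \ T)) ∩ nbhd M (P ∩ (T \ S)) := by
  intro b hb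
  obtain ⟨hbS, hbT⟩ := mem_inter.1 hb
  obtain ⟨s, hs, hsb⟩ := mem_nbhd.1 hbS
  obtain ⟨t, ht, htb⟩ := mem_nbhd.1 hbT
  simp only [mem_inter, mem_sdiff] at hs ht
  have hsT : s ∉ T := fun hsT =>
    ht.2.2 (hM.2.2.2.1.eq_of_snd_eq_of_mem_filter hsb htb hsT ht.2.1 ▸ hs.2)
  exact mem_inter.2 ⟨mem_nbhd.2 ⟨s, by simp [hs.1, hs.2, hsT], hsb⟩, hbT⟩

end SimMatching

theorem rule3a_sound_general (S T : Finset V) (E : Finset (V × W))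
    (P : Finset V) (hP : P ⊆ S ∪ T)
    (hAlmost : (nbhd E P).card +
      (nbhd E (P ∩ (S \ T)) ∩ nbhd E (P ∩ (T \ S))).card = P.card + 1)
    (u : V) (v : W)
    (hu : u ∈ (S ∩ T) \ P)
    (hv : v ∈ nbhd E (P ∩ (S \ T)) ∩ nbhd E (P ∩ (T \ S))) :
    ∀ M, SimMatching E M S T → (u, v) ∉ M := by
  intro M hM huv
  set XS := nbhd M (P ∩ S)
  set XT := nbhd M (P ∩ (T \ S))
  have hPsplit : P ∩ S ∪ P ∩ (T \ S) = P := by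
    rw [← inter_union_distrib_left, union_sdiff_self_eq_union, inter_eq_left.2 hP]
  have hcardP : XS.card + XT.card = P.card := by
    rw [card_nbhd_of_isMatching_filter hM.2.1 hM.2.2.1 inter_subset_right,
      card_nbhd_of_isMatching_filter hM.2.2.2.1 hM.2.2.2.2 (inter_subset_right.trans sdiff_subset),
      ← card_union_of_disjoint (disjoint_sdiff.mono inter_subset_right inter_subset_right),
      hPsplit]
  have hvM : v ∉ nbhd M P := hM.notMem_nbhd hP huv hu
  have hunion : XS ∪ XT ⊆ (nbhd E P).erase v := by
    rw [← nbhd_union, hPsplit]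
    exact fun b hb => mem_erase.2 ⟨fun h => hvM (h ▸ hb), nbhd_mono_edges hM.1 hb⟩
  have hinter : XS ∩ XT ⊆ (nbhd E (P ∩ (S \ T)) ∩ nbhd E (P ∩ (T \ S))).erase v := by
    intro b hb
    have hbP : b ∈ nbhd M P := nbhd_mono inter_subset_left (mem_inter.1 hb).1
    refine mem_erase.2 ⟨fun h => hvM (h ▸ hbP), ?_⟩
    exact inter_subset_inter (nbhd_mono_edges hM.1) (nbhd_mono_edges hM.1)
      (hM.nbhd_inter_nbhd_subset P hb)
  have hvN : v ∈ nbhd E P := nbhd_mono inter_subset_left (mem_inter.1 hv).1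
  have := card_union_add_card_inter XS XT
  have := card_le_card hunion
  have := card_le_card hinter
  have := card_erase_add_one hvN
  have := card_erase_add_one hv
  omega

/-- Rule 3a: if `P` is an almost simultaneous Hall set, no edge `(u,v)` with
`u ∈ (S ∩ T) \ P` and `v ∈ N(P^S) ∩ N(P^T)` can belong to a simultaneous matching. -/
theorem rule3a_sound (B : Finset W) (S T : Finset V) (E : Finset (V × W))
    (hE : E ⊆ (S ∪ T) ×ˢ B) (hST : (S ∩ T).Nonempty)
    (P : Finset V) (hP : P ⊆ S ∪ T)
    (hAlmost : (nbhd E P).card +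
      (nbhd E (P ∩ (S \ T)) ∩ nbhd E (P ∩ (T \ S))).card = P.card + 1)
    (u : V) (v : W) (huv : (u, v) ∈ E)
    (hu : u ∈ (S ∩ T) \ P)
    (hv : v ∈ nbhd E (P ∩ (S \ T)) ∩ nbhd E (P ∩ (T \ S))) :
    ∀ M, SimMatching E M S T → (u, v) ∉ M :=
  rule3a_sound_general S T E P hP hAlmost u v hu hv
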